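/- Let n ∈ ℕ with n ≥ 1, let A ⊂ ℝⁿ be compact, let V ⊆ ℝⁿ be an open set with A ⊆ V, and let η ∈ (0, 1/2). Then there exist a function φ : ℝⁿ → ℝ of class C² and a constant C > 0 such that: 0 ≤ φ ≤ 1 on ℝⁿ; φ = 1 on A; φ = 0 on ℝⁿ \ V; the function φ^η is also of class C²; and the pointwise estimates |∇φ(x)| ≤ C·φ(x)^{1−η} and |Δφ(x)| ≤ C·φ(x)^{1−2η} hold for all x ∈ ℝⁿ. -/

import Mathlib

open Set Metric Manifold

-- auxiliary: pow vs rpow comparison on [0,1]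
lemma aux_pow_le_rpow {t : ℝ} (h0 : 0 ≤ t) (h1 : t ≤ 1) {m k : ℕ} (hm : 0 < m) (hk : 0 < k)
    {e : ℝ} (he : 0 < e) (hke : (k : ℝ) * e ≤ m) : t ^ m ≤ (t ^ k : ℝ) ^ e := by
  rcases eq_or_lt_of_le h0 with h | h
  · rw [← h, zero_pow hm.ne', zero_pow hk.ne', Real.zero_rpow he.ne']
  · calc t ^ m = t ^ (m : ℝ) := by rw [Real.rpow_natCast]
      _ ≤ t ^ ((k : ℝ) * e) := Real.rpow_le_rpow_of_exponent_ge h h1 hke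
      _ = (t ^ (k : ℝ)) ^ e := Real.rpow_mul h0 _ _
      _ = (t ^ k : ℝ) ^ e := by rw [Real.rpow_natCast]

set_option maxHeartbeats 2000000 in
/-- Interior cutoff function construction: for a compact set `A` contained in an open set
`V ⊆ ℝⁿ` and `η ∈ (0, 1/2)` there exist a `C²` function `φ` with `0 ≤ φ ≤ 1`, `φ = 1` on `A`,
`φ = 0` outside `V`, `φ^η` of class `C²`, and `|∇φ| ≤ C φ^{1-η}`, `|Δφ| ≤ C φ^{1-2η}`. -/
theorem stmt_2 (n : ℕ) (hn : 1 ≤ n)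
    (A V : Set (EuclideanSpace ℝ (Fin n))) (hA : IsCompact A) (hV : IsOpen V)
    (hAV : A ⊆ V) (η : ℝ) (hη : η ∈ Set.Ioo (0:ℝ) (1/2)) :
    ∃ (φ : EuclideanSpace ℝ (Fin n) → ℝ) (C : ℝ), 0 < C ∧
      ContDiff ℝ 2 φ ∧
      (∀ x, 0 ≤ φ x) ∧ (∀ x, φ x ≤ 1) ∧
      (∀ x ∈ A, φ x = 1) ∧
      (∀ x ∉ V, φ x = 0) ∧
      ContDiff ℝ 2 (fun x => φ x ^ η) ∧
      (∀ x, ‖gradient φ x‖ ≤ C * φ x ^ (1 - η)) ∧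
      (∀ x, |∑ i : Fin n,
          fderiv ℝ (fun y => fderiv ℝ φ y (EuclideanSpace.single i 1)) x
            (EuclideanSpace.single i 1)| ≤ C * φ x ^ (1 - 2 * η)) := by
  obtain ⟨hη0, hη2⟩ := hη
  -- shrink V to a bounded open set U with compact closure
  obtain ⟨δ, hδ0, hδV⟩ := hA.exists_thickening_subset_open hV hAV
  set U : Set (EuclideanSpace ℝ (Fin n)) := Metric.thickening (δ/2) A with hUdef
  have hU_open : IsOpen U := Metric.isOpen_thickening
  have hAU : A ⊆ U := Metric.self_subset_thickening (by positivity) A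
  have hclU : closure U ⊆ Metric.cthickening (δ/2) A :=
    Metric.closure_thickening_subset_cthickening _ _
  have hK : IsCompact (closure U) :=
    (hA.cthickening).of_isClosed_subset isClosed_closure hclU
  have hUV : U ⊆ V := by
    refine subset_trans ?_ hδV
    exact (Metric.thickening_mono (by linarith) A)
  -- the smooth cutoff ψ
  obtain ⟨f, hf0, hf1, hf01⟩ := exists_contMDiffMap_zero_one_of_isClosed (𝓘(ℝ, EuclideanSpace ℝ (Fin n))) (n := (⊤ : ℕ∞))
    hU_open.isClosed_compl hA.isClosed (Set.disjoint_left.2 fun x hx hxA => hx (hAU hxA))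
  set ψ : EuclideanSpace ℝ (Fin n) → ℝ := ⇑f with hψdef
  have hψ : ContDiff ℝ (⊤ : ℕ∞) ψ := f.contMDiff.contDiff
  have hψ0 : ∀ x, 0 ≤ ψ x := fun x => (hf01 x).1
  have hψ1 : ∀ x, ψ x ≤ 1 := fun x => (hf01 x).2
  have hψA : ∀ x ∈ A, ψ x = 1 := fun x hx => hf1 hx
  have hψU : ∀ x ∉ U, ψ x = 0 := fun x hx => hf0 hx
  have hψ3 : ContDiff ℝ 3 ψ := hψ.of_le (by norm_cast)
  have hψd : Differentiable ℝ ψ := hψ3.differentiable (by norm_num)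
  -- choice of k
  set k : ℕ := ⌈(2:ℝ)/η⌉₊ with hkdef
  have hk2 : 2 ≤ (k:ℝ) * η := by
    have h := Nat.le_ceil ((2:ℝ)/η)
    rw [div_le_iff₀ hη0] at h
    exact_mod_cast h
  have hk5 : 5 ≤ k := by
    have h4 : (4:ℝ) < 2/η := by rw [lt_div_iff₀ hη0]; nlinarith
    have := lt_of_lt_of_le h4 (Nat.le_ceil ((2:ℝ)/η))
    have : (4:ℕ) < k := by exact_mod_cast this
    omega
  set φ : EuclideanSpace ℝ (Fin n) → ℝ := fun x => ψ x ^ k with hφdef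
  -- first and second derivatives of ψ
  set B : EuclideanSpace ℝ (Fin n) → (EuclideanSpace ℝ (Fin n) →L[ℝ] ℝ) :=
    fun y => fderiv ℝ ψ y with hBdef
  have hB : ContDiff ℝ 2 B := hψ3.fderiv_right (by norm_num)
  have hBd : Differentiable ℝ B := hB.differentiable (by norm_num)
  set F : EuclideanSpace ℝ (Fin n) →
      (EuclideanSpace ℝ (Fin n) →L[ℝ] (EuclideanSpace ℝ (Fin n) →L[ℝ] ℝ)) :=
    fun y => fderiv ℝ B y with hFdef
  have hFc : Continuous F := (hB.fderiv_right (m := 1) (by norm_num)).continuous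
  -- vanishing outside closure U
  have hψev : ∀ x ∉ closure U, ψ =ᶠ[nhds x] 0 := fun x hx =>
    Filter.eventually_of_mem (isClosed_closure.isOpen_compl.mem_nhds hx)
      (fun y hy => hψU y (fun h => hy (subset_closure h)))
  have hB0 : ∀ x ∉ closure U, B x = 0 := fun x hx => by
    rw [hBdef]; simp only
    rw [(hψev x hx).fderiv_eq]
    exact fderiv_const_apply 0
  have hF0 : ∀ x ∉ closure U, F x = 0 := by
    intro x hx
    have hBev : B =ᶠ[nhds x] 0 :=
      Filter.eventually_of_mem (isClosed_closure.isOpen_compl.mem_nhds hx)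
        (fun y hy => hB0 y hy)
    rw [hFdef]; simp only
    rw [hBev.fderiv_eq]
    exact fderiv_const_apply 0
  -- global bounds on derivatives
  obtain ⟨M₁', hM₁'⟩ := hK.exists_bound_of_continuousOn hB.continuous.continuousOn
  set G : EuclideanSpace ℝ (Fin n) → ℝ :=
    fun x => ∑ i : Fin n, |F x (EuclideanSpace.single i 1) (EuclideanSpace.single i 1)|
    with hGdef
  have hGc : Continuous G := by
    apply continuous_finset_sum
    intro i _
    exact (((hFc.clm_apply continuous_const).clm_apply continuous_const)).abs
  obtain ⟨M₂', hM₂'⟩ := hK.exists_bound_of_continuousOn hGc.continuousOn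
  set M₁ : ℝ := max M₁' 0 with hM₁def
  set M₂ : ℝ := max M₂' 0 with hM₂def
  have hM₁0 : 0 ≤ M₁ := le_max_right _ _
  have hM₂0 : 0 ≤ M₂ := le_max_right _ _
  have hM₁ : ∀ x, ‖B x‖ ≤ M₁ := by
    intro x
    by_cases hx : x ∈ closure U
    · exact le_trans (hM₁' x hx) (le_max_left _ _)
    · rw [hB0 x hx]; simpa using hM₁0
  have hM₂ : ∀ x, G x ≤ M₂ := by
    intro x
    by_cases hx : x ∈ closure U
    · exact le_trans (le_abs_self _) (le_trans (hM₂' x hx) (le_max_left _ _))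
    · have : G x = 0 := by
        rw [hGdef]; simp only
        rw [Finset.sum_eq_zero]
        intro i _
        rw [hF0 x hx]
        simp
      rw [this]; exact hM₂0
  -- derivative of φ
  have hφ' : ∀ x, HasFDerivAt φ (((k:ℝ) * ψ x ^ (k-1)) • B x) x := fun x =>
    (hasDerivAt_pow k (ψ x)).comp_hasFDerivAt x (hψd x).hasFDerivAt
  -- basic facts about φ
  have hφ0 : ∀ x, 0 ≤ φ x := fun x => pow_nonneg (hψ0 x) k
  have hφ1 : ∀ x, φ x ≤ 1 := fun x => pow_le_one₀ (hψ0 x) (hψ1 x)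
  set C : ℝ := (n : ℝ) * ((k:ℝ) * M₂ + (k:ℝ)^2 * M₁^2) + (k:ℝ) * M₁ + 1 with hCdef
  have hn1 : (1:ℝ) ≤ (n:ℝ) := by exact_mod_cast hn
  have hC0 : 0 < C := by positivity
  have hksub : ((k - 1 : ℕ) : ℝ) = (k : ℝ) - 1 := by
    rw [Nat.cast_sub (by omega)]; norm_num
  have hksub2 : ((k - 2 : ℕ) : ℝ) = (k : ℝ) - 2 := by
    rw [Nat.cast_sub (by omega)]; norm_num
  -- comparison of powers of ψ with rpowers of φ
  have hpow1 : ∀ x, ψ x ^ (k - 1) ≤ φ x ^ (1 - η) := by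
    intro x
    refine aux_pow_le_rpow (hψ0 x) (hψ1 x) (by omega) (by omega) (by linarith) ?_
    rw [hksub]
    nlinarith
  have hpow2 : ∀ x, ψ x ^ (k - 2) ≤ φ x ^ (1 - 2 * η) := by
    intro x
    refine aux_pow_le_rpow (hψ0 x) (hψ1 x) (by omega) (by omega) (by linarith) ?_
    rw [hksub2]
    nlinarith
  refine ⟨φ, C, hC0, ?_, hφ0, hφ1, ?_, ?_, ?_, ?_, ?_⟩
  · -- C² regularity of φ
    exact (hψ3.of_le (by norm_num)).pow k
  · -- φ = 1 on A
    intro x hx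
    rw [hφdef]
    simp [hψA x hx]
  · -- φ = 0 outside V
    intro x hx
    have hxU : x ∉ U := fun h => hx (hUV h)
    rw [hφdef]
    simp [hψU x hxU, zero_pow (by omega : k ≠ 0)]
  · -- φ^η is C²
    have heq : (fun x => φ x ^ η) = (fun t : ℝ => t ^ ((k:ℝ) * η)) ∘ ψ := by
      funext x
      simp only [Function.comp, hφdef]
      rw [← Real.rpow_natCast (ψ x) k, ← Real.rpow_mul (hψ0 x)]
    rw [heq]
    have h2 : ((2:ℕ) : ℝ) ≤ (k:ℝ) * η := by exact_mod_cast hk2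
    exact (Real.contDiff_rpow_const_of_le h2).comp (hψ3.of_le (by norm_num))
  · -- gradient estimate
    intro x
    have hgn : ‖gradient φ x‖ = ‖fderiv ℝ φ x‖ := by
      rw [gradient]
      exact LinearIsometryEquiv.norm_map _ _
    have hp1 : (0:ℝ) ≤ ψ x ^ (k-1) := pow_nonneg (hψ0 x) _
    rw [hgn, (hφ' x).fderiv, norm_smul]
    have h1 : ‖(k:ℝ) * ψ x ^ (k-1)‖ = (k:ℝ) * ψ x ^ (k-1) := by
      rw [Real.norm_eq_abs, abs_of_nonneg]
      exact mul_nonneg (Nat.cast_nonneg k) hp1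
    rw [h1]
    calc (k:ℝ) * ψ x ^ (k-1) * ‖B x‖ ≤ (k:ℝ) * ψ x ^ (k-1) * M₁ := by
          exact mul_le_mul_of_nonneg_left (hM₁ x) (mul_nonneg (Nat.cast_nonneg k) hp1)
      _ = (k:ℝ) * M₁ * (ψ x ^ (k-1)) := by ring
      _ ≤ (k:ℝ) * M₁ * (φ x ^ (1 - η)) := by
          exact mul_le_mul_of_nonneg_left (hpow1 x) (mul_nonneg (Nat.cast_nonneg k) hM₁0)
      _ ≤ C * φ x ^ (1 - η) := by
          apply mul_le_mul_of_nonneg_right _ (Real.rpow_nonneg (hφ0 x) _)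
          rw [hCdef]
          have hnn : 0 ≤ (n:ℝ) * ((k:ℝ) * M₂ + (k:ℝ)^2 * M₁^2) :=
            mul_nonneg (Nat.cast_nonneg n)
              (add_nonneg (mul_nonneg (Nat.cast_nonneg k) hM₂0)
                (mul_nonneg (sq_nonneg _) (sq_nonneg _)))
          linarith
  · -- Laplacian estimate
    intro x
    have hBbound : ∀ i : Fin n, |B x (EuclideanSpace.single i 1)| ≤ M₁ := by
      intro i
      calc |B x (EuclideanSpace.single i 1)| ≤ ‖B x‖ * ‖EuclideanSpace.single i (1:ℝ)‖ :=
            (B x).le_opNorm _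
        _ = ‖B x‖ := by rw [EuclideanSpace.norm_single]; simp
        _ ≤ M₁ := hM₁ x
    have hterm : ∀ i : Fin n,
        fderiv ℝ (fun y => fderiv ℝ φ y (EuclideanSpace.single i 1)) x
          (EuclideanSpace.single i 1)
        = (k:ℝ) * ψ x ^ (k-1) *
            (F x (EuclideanSpace.single i 1) (EuclideanSpace.single i 1))
          + B x (EuclideanSpace.single i 1) *
            ((k:ℝ) * ((k-1:ℕ):ℝ) * ψ x ^ (k-2) * B x (EuclideanSpace.single i 1)) := by
      intro i
      have hfun : (fun y => fderiv ℝ φ y (EuclideanSpace.single i 1)) =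
          fun y => ((k:ℝ) * ψ y ^ (k-1)) * (B y (EuclideanSpace.single i 1)) := by
        funext y
        rw [(hφ' y).fderiv]
        simp [ContinuousLinearMap.smul_apply, smul_eq_mul]
      have hadiff : DifferentiableAt ℝ (fun y => (k:ℝ) * ψ y ^ (k-1)) x :=
        ((hψd x).pow _).const_mul _
      have hbdiff : DifferentiableAt ℝ (fun y => B y (EuclideanSpace.single i 1)) x :=
        (hBd x).clm_apply (differentiableAt_const _)
      have ha' : HasFDerivAt (fun y => (k:ℝ) * ψ y ^ (k-1))
          ((k:ℝ) • ((((k-1:ℕ)):ℝ) * ψ x ^ (k-1-1)) • B x) x :=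
        ((hasDerivAt_pow (k-1) (ψ x)).comp_hasFDerivAt x (hψd x).hasFDerivAt).const_mul _
      have hb' : fderiv ℝ (fun y => B y (EuclideanSpace.single i 1)) x
          (EuclideanSpace.single i 1)
          = F x (EuclideanSpace.single i 1) (EuclideanSpace.single i 1) := by
        rw [fderiv_clm_apply (hBd x) (differentiableAt_const _)]
        simp [hFdef]
      rw [hfun, fderiv_fun_mul hadiff hbdiff]
      rw [ContinuousLinearMap.add_apply, ContinuousLinearMap.smul_apply,
        ContinuousLinearMap.smul_apply]
      rw [hb', ha'.fderiv]
      have hk12 : k - 1 - 1 = k - 2 := by omega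
      simp only [ContinuousLinearMap.smul_apply, hk12, smul_eq_mul]
      ring
    have hψk12 : ψ x ^ (k-1) ≤ ψ x ^ (k-2) :=
      pow_le_pow_of_le_one (hψ0 x) (hψ1 x) (by omega)
    have habs : ∀ i : Fin n,
        |fderiv ℝ (fun y => fderiv ℝ φ y (EuclideanSpace.single i 1)) x
          (EuclideanSpace.single i 1)|
        ≤ (k:ℝ) * ψ x ^ (k-2) *
            |F x (EuclideanSpace.single i 1) (EuclideanSpace.single i 1)|
          + (k:ℝ)^2 * M₁^2 * ψ x ^ (k-2) := by
      intro i
      rw [hterm i]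
      refine le_trans (abs_add_le _ _) ?_
      gcongr ?_ + ?_
      · rw [abs_mul]
        have h1 : |(k:ℝ) * ψ x ^ (k-1)| = (k:ℝ) * ψ x ^ (k-1) := by
          rw [abs_of_nonneg (mul_nonneg (Nat.cast_nonneg k) (pow_nonneg (hψ0 x) _))]
        rw [h1]
        apply mul_le_mul_of_nonneg_right _ (abs_nonneg _)
        exact mul_le_mul_of_nonneg_left hψk12 (Nat.cast_nonneg k)
      · rw [abs_mul, abs_mul, abs_mul, abs_mul]
        have hk1 : |((k-1:ℕ):ℝ)| ≤ (k:ℝ) := by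
          rw [abs_of_nonneg (Nat.cast_nonneg _)]
          exact_mod_cast Nat.sub_le k 1
        have hψabs : |ψ x ^ (k-2)| = ψ x ^ (k-2) := abs_of_nonneg (pow_nonneg (hψ0 x) _)
        have hkk : |(k:ℝ)| = (k:ℝ) := abs_of_nonneg (Nat.cast_nonneg _)
        rw [hψabs, hkk]
        calc |B x (EuclideanSpace.single i 1)| *
              ((k:ℝ) * |((k-1:ℕ):ℝ)| * ψ x ^ (k-2) * |B x (EuclideanSpace.single i 1)|)
            ≤ M₁ * ((k:ℝ) * (k:ℝ) * ψ x ^ (k-2) * M₁) := by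
              have h0 : 0 ≤ ψ x ^ (k-2) := pow_nonneg (hψ0 x) _
              have hb := hBbound i
              have hbn := abs_nonneg (B x (EuclideanSpace.single i 1))
              have hbb : |B x (EuclideanSpace.single i 1)| * |B x (EuclideanSpace.single i 1)|
                  ≤ M₁ * M₁ := mul_le_mul hb hb hbn hM₁0
              have hkk1 : (k:ℝ) * |((k-1:ℕ):ℝ)| ≤ (k:ℝ) * (k:ℝ) :=
                mul_le_mul_of_nonneg_left hk1 (Nat.cast_nonneg k)
              have hmain := mul_le_mul_of_nonneg_right
                (mul_le_mul hkk1 hbb (mul_nonneg hbn hbn)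
                  (mul_nonneg (Nat.cast_nonneg k) (Nat.cast_nonneg k))) h0
              nlinarith [hmain]
          _ = (k:ℝ)^2 * M₁^2 * ψ x ^ (k-2) := by ring
    calc |∑ i : Fin n, fderiv ℝ (fun y => fderiv ℝ φ y (EuclideanSpace.single i 1)) x
            (EuclideanSpace.single i 1)|
        ≤ ∑ i : Fin n, |fderiv ℝ (fun y => fderiv ℝ φ y (EuclideanSpace.single i 1)) x
            (EuclideanSpace.single i 1)| := Finset.abs_sum_le_sum_abs _ _
      _ ≤ ∑ i : Fin n, ((k:ℝ) * ψ x ^ (k-2) *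
            |F x (EuclideanSpace.single i 1) (EuclideanSpace.single i 1)|
            + (k:ℝ)^2 * M₁^2 * ψ x ^ (k-2)) :=
          Finset.sum_le_sum (fun i _ => habs i)
      _ = (k:ℝ) * ψ x ^ (k-2) * G x + (n:ℝ) * ((k:ℝ)^2 * M₁^2 * ψ x ^ (k-2)) := by
          rw [Finset.sum_add_distrib, ← Finset.mul_sum, hGdef]
          simp [Finset.sum_const, nsmul_eq_mul]
      _ ≤ (n:ℝ) * ((k:ℝ) * M₂ + (k:ℝ)^2 * M₁^2) * ψ x ^ (k-2) := by
          have hGx := hM₂ x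
          have h0 : 0 ≤ ψ x ^ (k-2) := pow_nonneg (hψ0 x) _
          have h1 : (k:ℝ) * ψ x ^ (k-2) * G x ≤ (k:ℝ) * ψ x ^ (k-2) * M₂ :=
            mul_le_mul_of_nonneg_left hGx (mul_nonneg (Nat.cast_nonneg k) h0)
          have h2 : (k:ℝ) * ψ x ^ (k-2) * M₂ ≤ (n:ℝ) * ((k:ℝ) * ψ x ^ (k-2) * M₂) :=
            le_mul_of_one_le_left (mul_nonneg (mul_nonneg (Nat.cast_nonneg k) h0) hM₂0) hn1
          nlinarith [h1, h2]
      _ ≤ (n:ℝ) * ((k:ℝ) * M₂ + (k:ℝ)^2 * M₁^2) * (φ x ^ (1 - 2*η)) := by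
          exact mul_le_mul_of_nonneg_left (hpow2 x)
            (mul_nonneg (Nat.cast_nonneg n)
              (add_nonneg (mul_nonneg (Nat.cast_nonneg k) hM₂0)
                (mul_nonneg (sq_nonneg _) (sq_nonneg _))))
      _ ≤ C * φ x ^ (1 - 2*η) := by
          apply mul_le_mul_of_nonneg_right _ (Real.rpow_nonneg (hφ0 x) _)
          rw [hCdef]
          have hkM : 0 ≤ (k:ℝ) * M₁ := mul_nonneg (Nat.cast_nonneg k) hM₁0
          linarith
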